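/- arXiv:1008.1714 — 9 statements merged into one kernel-verified Lean document; each statement's English description precedes it below -/
import Mathlib

section
/- For every n and every j with 0 ≤ j ≤ n: every element of ψ j n has dimension j, every element of ω j n has dimension j, and the cardinalities satisfy card (ψ j n) = Nat.choose n j = card (ω j n). (In the paper's language: the collections Ψ_n = ⋃_j ψ_j[n] and Ω_n = ⋃_j ω_j[n] of source and target faces are (n,n)-piles.) -/
def geom {n : ℕ} (x : Fin n → SignType) : Set (Fin n → ℝ) :=
  {p | ∀ i, (x i = 0 → p i ∈ Set.Icc (-1 : ℝ) 1) ∧ (x i ≠ 0 → p i = (x i : ℝ))}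

def dim {n : ℕ} (x : Fin n → SignType) : ℕ :=
  (Finset.univ.filter fun i => x i = 0).card

def zeroSet {n : ℕ} (x : Fin n → SignType) : Finset (Fin n) :=
  Finset.univ.filter fun i => x i = 0

def app {n : ℕ} (s : SignType) (x : Fin n → SignType) : Fin (n + 1) → SignType :=
  Fin.snoc x s

def Psi : (k n : ℕ) → Finset (Fin n → SignType)
  | _, 0 => {fun i => i.elim0}
  | 0, _ + 1 => {fun _ => -1}
  | k + 1, n + 1 =>
    if n + 1 ≤ k + 1 then {fun _ => 0}
    else if Even (k + 1) then
      (Psi k n).image (app 0) ∪ (Psi (k + 1) n).image (app (-1))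
    else
      (Psi k n).image (app 0) ∪ (Psi (k + 1) n).image (app 1)

def Omega : (k n : ℕ) → Finset (Fin n → SignType)
  | _, 0 => {fun i => i.elim0}
  | 0, _ + 1 => {fun _ => 1}
  | k + 1, n + 1 =>
    if n + 1 ≤ k + 1 then {fun _ => 0}
    else if Even (k + 1) then
      (Omega (k + 1) n).image (app 1) ∪ (Omega k n).image (app 0)
    else
      (Omega (k + 1) n).image (app (-1)) ∪ (Omega k n).image (app 0)

lemma dim_app {n : ℕ} (s : SignType) (x : Fin n → SignType) :
    dim (app s x) = dim x + if s = 0 then 1 else 0 := by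
  unfold dim app
  rw [Finset.card_filter, Finset.card_filter, Fin.sum_univ_castSucc]
  simp [Fin.snoc_castSucc, Fin.snoc_last]

lemma app_inj {n : ℕ} (s : SignType) :
    Function.Injective (app s : (Fin n → SignType) → _) := by
  intro x y h; funext i
  have := congrFun h i.castSucc
  simpa [app, Fin.snoc_castSucc] using this

lemma disj {n : ℕ} (A B : Finset (Fin n → SignType)) {s t : SignType} (h : s ≠ t) :
    Disjoint (A.image (app s)) (B.image (app t)) := by
  rw [Finset.disjoint_left]
  rintro z hz hz'
  obtain ⟨x, -, rfl⟩ := Finset.mem_image.mp hz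
  obtain ⟨y, -, hy⟩ := Finset.mem_image.mp hz'
  have := congrFun hy (Fin.last n)
  simp only [app, Fin.snoc_last] at this
  exact h this.symm

lemma main_step {n k : ℕ} (A B : Finset (Fin n → SignType)) {s : SignType} (hs : s ≠ 0)
    (hA : ∀ x ∈ A, dim x = k) (hB : ∀ x ∈ B, dim x = k + 1)
    (cA : A.card = n.choose k) (cB : B.card = n.choose (k + 1)) :
    (∀ x ∈ A.image (app 0) ∪ B.image (app s), dim x = k + 1) ∧
    (A.image (app 0) ∪ B.image (app s)).card = (n + 1).choose (k + 1) := by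
  constructor
  · intro x hx
    rcases Finset.mem_union.mp hx with hx | hx
    · obtain ⟨y, hy, rfl⟩ := Finset.mem_image.mp hx
      rw [dim_app]; simp [hA y hy]
    · obtain ⟨y, hy, rfl⟩ := Finset.mem_image.mp hx
      rw [dim_app]; simp [hs, hB y hy]
  · rw [Finset.card_union_of_disjoint (disj A B (Ne.symm hs)),
      Finset.card_image_of_injective _ (app_inj _),
      Finset.card_image_of_injective _ (app_inj _), cA, cB]
    exact (Nat.choose_succ_succ n k).symm

/-- The source and target faces `ψ j n`, `ω j n` consist of `j`-dimensional sub-cubes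
and have the binomial cardinalities: `Ψ_n` and `Ω_n` are `(n,n)`-piles. -/
theorem stmt_1 (n j : ℕ) (hj : j ≤ n) :
    (∀ x ∈ Psi j n, dim x = j) ∧ (∀ x ∈ Omega j n, dim x = j) ∧
    (Psi j n).card = Nat.choose n j ∧ (Omega j n).card = Nat.choose n j := by
  induction n generalizing j with
  | zero =>
    obtain rfl : j = 0 := Nat.le_zero.mp hj
    simp [Psi, Omega, dim]
  | succ n ih =>
    match j with
    | 0 =>
      refine ⟨?_, ?_, ?_, ?_⟩ <;> simp [Psi, Omega, dim]
    | k + 1 =>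
      rcases eq_or_lt_of_le hj with heq | hlt
      · obtain rfl : k = n := by omega
        rw [Psi, Omega]
        simp only [le_refl, if_true]
        refine ⟨?_, ?_, ?_, ?_⟩ <;> simp [dim, Nat.choose_self]
      · have hkn : k + 1 ≤ n := by omega
        obtain ⟨hP1, hO1, cP1, cO1⟩ := ih k (by omega)
        obtain ⟨hP2, hO2, cP2, cO2⟩ := ih (k + 1) hkn
        rw [Psi, Omega]
        simp only [show ¬ (n + 1 ≤ k + 1) by omega, if_false]
        by_cases he : Even (k + 1)
        · simp only [he, if_true]
          obtain ⟨d1, c1⟩ := main_step (Psi k n) (Psi (k+1) n)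
            (show (-1 : SignType) ≠ 0 by decide) hP1 hP2 cP1 cP2
          obtain ⟨d2, c2⟩ := main_step (Omega k n) (Omega (k+1) n)
            (show (1 : SignType) ≠ 0 by decide) hO1 hO2 cO1 cO2
          rw [Finset.union_comm ((Omega (k+1) n).image (app 1))]
          exact ⟨d1, d2, c1, c2⟩
        · simp only [he, if_false]
          obtain ⟨d1, c1⟩ := main_step (Psi k n) (Psi (k+1) n)
            (show (1 : SignType) ≠ 0 by decide) hP1 hP2 cP1 cP2
          obtain ⟨d2, c2⟩ := main_step (Omega k n) (Omega (k+1) n)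
            (show (-1 : SignType) ≠ 0 by decide) hO1 hO2 cO1 cO2
          rw [Finset.union_comm ((Omega (k+1) n).image (app (-1)))]
          exact ⟨d1, d2, c1, c2⟩
end

section
/- For every n, every k with 0 ≤ k ≤ n, and every subset S of Fin n with card S = k, there is exactly one x ∈ ψ k n with x⁻¹(0) = S, and exactly one y ∈ ω k n with y⁻¹(0) = S. (That is, ψ k n and ω k n are k-sections: each chooses a unique representative from every parallel class of k-dimensional sub-cubes, where two sub-cubes are parallel iff they have the same zero-set.) -/
open Finset

lemma mem_zeroSet {n} (x : Fin n → SignType) (i : Fin n) : i ∈ zeroSet x ↔ x i = 0 := by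
  simp [zeroSet]

lemma last_notMem_image {n} (Z : Finset (Fin n)) :
    Fin.last n ∉ Z.image Fin.castSucc := by
  simp only [mem_image, not_exists, not_and]
  intro i _
  exact (Fin.castSucc_lt_last i).ne

lemma zeroSet_app_zero {n} (x : Fin n → SignType) :
    zeroSet (app 0 x) = insert (Fin.last n) ((zeroSet x).image Fin.castSucc) := by
  ext j
  refine Fin.lastCases ?_ ?_ j
  · simp [mem_zeroSet, app, Fin.snoc_last]
  · intro i
    simp only [mem_zeroSet, app, Fin.snoc_castSucc, mem_insert, mem_image]
    constructor
    · intro h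
      exact Or.inr ⟨i, h, rfl⟩
    · rintro ((h | ⟨i', hi', h⟩))
      · exact absurd h (Fin.castSucc_lt_last i).ne
      · rw [← (Fin.castSucc_injective n) h]
        exact hi'

lemma zeroSet_app_ne {n} (s : SignType) (hs : s ≠ 0) (x : Fin n → SignType) :
    zeroSet (app s x) = (zeroSet x).image Fin.castSucc := by
  ext j
  refine Fin.lastCases ?_ ?_ j
  · simp only [mem_zeroSet, app, Fin.snoc_last]
    constructor
    · intro h; exact absurd h hs
    · intro h; exact absurd h (last_notMem_image _)
  · intro i
    simp only [mem_zeroSet, app, Fin.snoc_castSucc, mem_image]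
    constructor
    · intro h; exact ⟨i, h, rfl⟩
    · rintro ⟨i', hi', h⟩
      rw [← (Fin.castSucc_injective n) h]
      exact hi'

lemma step_lemma {n k : ℕ} (s : SignType) (hs : s ≠ 0) (A B : Finset (Fin n → SignType))
    (hA : ∀ S : Finset (Fin n), S.card = k → ∃! y, y ∈ A ∧ zeroSet y = S)
    (hB : ∀ S : Finset (Fin n), S.card = k + 1 → ∃! y, y ∈ B ∧ zeroSet y = S)
    (S : Finset (Fin (n + 1))) (hS : S.card = k + 1) :
    ∃! x, x ∈ A.image (app 0) ∪ B.image (app s) ∧ zeroSet x = S := by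
  set T : Finset (Fin n) := univ.filter (fun i => i.castSucc ∈ S) with hT
  have hTim : T.image Fin.castSucc = S.erase (Fin.last n) := by
    ext j
    constructor
    · intro hj
      simp only [mem_image, hT, mem_filter] at hj
      obtain ⟨i, ⟨-, hi⟩, rfl⟩ := hj
      exact mem_erase.2 ⟨(Fin.castSucc_lt_last i).ne, hi⟩
    · intro hj
      obtain ⟨hne, hjS⟩ := mem_erase.1 hj
      obtain ⟨i, rfl⟩ := Fin.exists_castSucc_eq.2 hne
      exact mem_image.2 ⟨i, by simp [hT, hjS], rfl⟩
  by_cases hlast : Fin.last n ∈ S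
  · have hTcard : T.card = k := by
      have h1 : (T.image Fin.castSucc).card = T.card :=
        card_image_of_injective _ (Fin.castSucc_injective n)
      rw [hTim, card_erase_of_mem hlast, hS] at h1
      omega
    obtain ⟨y, ⟨hyA, hyZ⟩, hyu⟩ := hA T hTcard
    refine ⟨app 0 y, ⟨mem_union_left _ (mem_image_of_mem _ hyA), ?_⟩, ?_⟩
    · rw [zeroSet_app_zero, hyZ, hTim, insert_erase hlast]
    · rintro x ⟨hx, hxZ⟩
      rcases mem_union.1 hx with hx | hx
      · obtain ⟨y', hy', rfl⟩ := mem_image.1 hx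
        have hz : zeroSet y' = T := by
          apply Finset.image_injective (Fin.castSucc_injective n)
          have h1 : insert (Fin.last n) ((zeroSet y').image Fin.castSucc) = S := by
            rw [← zeroSet_app_zero]; exact hxZ
          rw [hTim, ← h1, erase_insert (last_notMem_image _)]
        rw [hyu y' ⟨hy', hz⟩]
      · obtain ⟨y', hy', rfl⟩ := mem_image.1 hx
        exfalso
        have h2 : Fin.last n ∈ zeroSet (app s y') := hxZ ▸ hlast
        rw [zeroSet_app_ne s hs] at h2
        exact last_notMem_image _ h2
  · have hTim' : T.image Fin.castSucc = S := by rw [hTim, erase_eq_of_notMem hlast]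
    have hTcard : T.card = k + 1 := by
      rw [← hS, ← hTim', card_image_of_injective _ (Fin.castSucc_injective n)]
    obtain ⟨y, ⟨hyB, hyZ⟩, hyu⟩ := hB T hTcard
    refine ⟨app s y, ⟨mem_union_right _ (mem_image_of_mem _ hyB),
      by rw [zeroSet_app_ne s hs, hyZ, hTim']⟩, ?_⟩
    rintro x ⟨hx, hxZ⟩
    rcases mem_union.1 hx with hx | hx
    · obtain ⟨y', hy', rfl⟩ := mem_image.1 hx
      exfalso
      apply hlast
      rw [← hxZ, zeroSet_app_zero]
      exact mem_insert_self _ _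
    · obtain ⟨y', hy', rfl⟩ := mem_image.1 hx
      have hz : zeroSet y' = T := by
        apply Finset.image_injective (Fin.castSucc_injective n)
        rw [← zeroSet_app_ne s hs, hxZ, hTim']
      rw [hyu y' ⟨hy', hz⟩]

lemma main_lemma : ∀ n k, k ≤ n → ∀ S : Finset (Fin n), S.card = k →
    (∃! x, x ∈ Psi k n ∧ zeroSet x = S) ∧ (∃! y, y ∈ Omega k n ∧ zeroSet y = S) := by
  intro n
  induction n with
  | zero =>
    intro k hk S hS
    interval_cases k
    have hS0 : S = ∅ := Finset.card_eq_zero.1 hS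
    subst hS0
    constructor <;>
      exact ⟨fun i => i.elim0, ⟨by simp [Psi, Omega], by ext i; exact i.elim0⟩,
        fun x _ => funext fun i => i.elim0⟩
  | succ n ih =>
    intro k hk S hS
    match k with
    | 0 =>
      have hS0 : S = ∅ := Finset.card_eq_zero.1 hS
      subst hS0
      constructor
      · exact ⟨fun _ => -1, ⟨by simp [Psi], by ext i; simp [mem_zeroSet]⟩,
          fun x hx => by simpa [Psi] using hx.1⟩
      · exact ⟨fun _ => 1, ⟨by simp [Omega], by ext i; simp [mem_zeroSet]⟩,
          fun x hx => by simpa [Omega] using hx.1⟩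
    | k + 1 =>
      by_cases h : n + 1 ≤ k + 1
      · have hkn : k = n := by omega
        subst hkn
        have hSu : S = univ := Finset.eq_univ_of_card S (by simp [hS])
        subst hSu
        constructor
        · exact ⟨fun _ => 0, ⟨by simp [Psi], by ext i; simp [mem_zeroSet]⟩,
            fun x hx => by simpa [Psi] using hx.1⟩
        · exact ⟨fun _ => 0, ⟨by simp [Omega], by ext i; simp [mem_zeroSet]⟩,
            fun x hx => by simpa [Omega] using hx.1⟩
      · have hkn : k + 1 ≤ n := by omega
        have hA := fun S hS => (ih k (by omega) S hS)
        have hB := fun S hS => (ih (k + 1) hkn S hS)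
        constructor
        · by_cases he : Even (k + 1)
          · simp only [Psi, if_neg h, if_pos he]
            exact step_lemma (-1) (by decide) _ _ (fun S hS => (hA S hS).1)
              (fun S hS => (hB S hS).1) S hS
          · simp only [Psi, if_neg h, if_neg he]
            exact step_lemma 1 (by decide) _ _ (fun S hS => (hA S hS).1)
              (fun S hS => (hB S hS).1) S hS
        · by_cases he : Even (k + 1)
          · simp only [Omega, if_neg h, if_pos he, Finset.union_comm]
            exact step_lemma 1 (by decide) _ _ (fun S hS => (hA S hS).2)
              (fun S hS => (hB S hS).2) S hS
          · simp only [Omega, if_neg h, if_neg he, Finset.union_comm]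
            exact step_lemma (-1) (by decide) _ _ (fun S hS => (hA S hS).2)
              (fun S hS => (hB S hS).2) S hS

/-- `ψ k n` and `ω k n` are `k`-sections: they contain a unique representative of each
parallel class of `k`-dimensional sub-cubes. -/
theorem stmt_2 (n k : ℕ) (hk : k ≤ n) (S : Finset (Fin n)) (hS : S.card = k) :
    (∃! x, x ∈ Psi k n ∧ zeroSet x = S) ∧ (∃! y, y ∈ Omega k n ∧ zeroSet y = S) := by
  exact main_lemma n k hk S hS
end

section
/- For every n and every k, ψ k n is the image of ω k n under the antipodal map, i.e. ψ k n = (fun x => fun i => -(x i)) '' (ω k n), where negation on SignType interchanges -1 and +1 and fixes 0. In particular the antipodal map interchanges ψ k n and ω k n. -/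
lemma neg_app {n : ℕ} (s : SignType) (x : Fin n → SignType) :
    (fun i => -(app s x i)) = app (-s) (fun i => -(x i)) := by
  funext i
  refine Fin.lastCases ?_ ?_ i <;> simp [app]

lemma image_neg_app {n : ℕ} (s : SignType) (S : Finset (Fin n → SignType)) :
    (S.image (app s)).image (fun x => fun i => -(x i))
      = (S.image (fun x => fun i => -(x i))).image (app (-s)) := by
  rw [Finset.image_image, Finset.image_image]
  apply Finset.image_congr
  intro x _
  exact neg_app s x

/-- The antipodal map interchanges the source and target `k`-faces. -/
theorem stmt_3 (n k : ℕ) :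
    Psi k n = (Omega k n).image (fun x => fun i => -(x i)) := by
  induction n generalizing k with
  | zero =>
      cases k <;> simp [Psi, Omega, Finset.image_singleton] <;>
        exact Subsingleton.elim _ _
  | succ n ih =>
      cases k with
      | zero =>
          simp [Psi, Omega, Finset.image_singleton]
      | succ k =>
          rw [Psi, Omega]
          split_ifs with h hp
          · simp only [Finset.image_singleton]
            norm_num
          · rw [Finset.image_union, image_neg_app, image_neg_app, ← ih, ← ih]
            norm_num [Finset.union_comm]
          · rw [Finset.image_union, image_neg_app, image_neg_app, ← ih, ← ih]
            norm_num [Finset.union_comm]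
end

section
/- Closed-form characterization of the source and target faces: for 0 ≤ k ≤ n, a word x : Fin n → SignType belongs to ψ k n if and only if x has dimension k and for every index i with x i ≠ 0 one has x i = -1 when the number of indices j < i with x j = 0 is even, and x i = +1 when that number is odd; dually, x belongs to ω k n if and only if x has dimension k and for every index i with x i ≠ 0 one has x i = +1 when the number of indices j < i with x j = 0 is even, and x i = -1 when that number is odd. -/
open Finset

def cnt {n : ℕ} (x : Fin n → SignType) (i : Fin n) : ℕ :=
  (Finset.univ.filter fun j => j < i ∧ x j = 0).card

lemma mem_image_app {n : ℕ} (s : SignType) (T : Finset (Fin n → SignType))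
    (x : Fin (n+1) → SignType) :
    x ∈ T.image (app s) ↔ x (Fin.last n) = s ∧ Fin.init x ∈ T := by
  simp only [Finset.mem_image]
  constructor
  · rintro ⟨y, hy, rfl⟩
    simp [app, Fin.init_snoc, hy]
  · rintro ⟨h1, h2⟩
    exact ⟨Fin.init x, h2, by simp [app, ← h1, Fin.snoc_init_self]⟩

lemma dim_init {n : ℕ} (x : Fin (n+1) → SignType) :
    dim x = dim (Fin.init x) + (if x (Fin.last n) = 0 then 1 else 0) := by
  unfold dim
  rw [Finset.card_filter, Finset.card_filter, Fin.sum_univ_castSucc]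
  rfl

lemma cnt_castSucc {n : ℕ} (x : Fin (n+1) → SignType) (i : Fin n) :
    cnt x (Fin.castSucc i) = cnt (Fin.init x) i := by
  unfold cnt
  rw [Finset.card_filter, Finset.card_filter, Fin.sum_univ_castSucc]
  have h1 : ¬ (Fin.last n < Fin.castSucc i) := not_lt.mpr (Fin.castSucc_lt_last i).le
  simp only [Fin.castSucc_lt_castSucc_iff, h1, false_and, if_false, add_zero]
  rfl

lemma cnt_last {n : ℕ} (x : Fin (n+1) → SignType) :
    cnt x (Fin.last n) = dim (Fin.init x) := by
  unfold cnt dim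
  rw [Finset.card_filter, Finset.card_filter, Fin.sum_univ_castSucc]
  have h1 : ¬ (Fin.last n < Fin.last n) := lt_irrefl _
  simp only [Fin.castSucc_lt_last, true_and, h1, false_and, if_false, add_zero]
  rfl

def Cond {n : ℕ} (e : SignType) (x : Fin n → SignType) : Prop :=
  ∀ i, x i ≠ 0 → (Even (cnt x i) → x i = e) ∧ (Odd (cnt x i) → x i = -e)

lemma cond_snoc {n : ℕ} (e : SignType) (x : Fin (n+1) → SignType) :
    Cond e x ↔ Cond e (Fin.init x) ∧ (x (Fin.last n) ≠ 0 →
      (Even (dim (Fin.init x)) → x (Fin.last n) = e) ∧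
      (Odd (dim (Fin.init x)) → x (Fin.last n) = -e)) := by
  constructor
  · intro h
    refine ⟨fun i hi => ?_, fun hl => ?_⟩
    · have := h (Fin.castSucc i) hi
      rwa [cnt_castSucc] at this
    · have := h (Fin.last n) hl
      rwa [cnt_last] at this
  · rintro ⟨h1, h2⟩ i hi
    induction i using Fin.lastCases with
    | last => rw [cnt_last]; exact h2 hi
    | cast i => rw [cnt_castSucc]; exact h1 i hi

lemma union_char {n k : ℕ} (e : SignType) (he : e ≠ 0)
    {A B : Finset (Fin n → SignType)}
    (hA : ∀ y, y ∈ A ↔ dim y = k ∧ Cond e y)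
    (hB : ∀ y, y ∈ B ↔ dim y = k + 1 ∧ Cond e y)
    (s : SignType) (hs : s = if Even (k + 1) then e else -e)
    (x : Fin (n + 1) → SignType) :
    x ∈ A.image (app 0) ∪ B.image (app s) ↔ dim x = k + 1 ∧ Cond e x := by
  have hne : (-e : SignType) ≠ 0 := by cases e <;> revert he <;> decide
  have hs0 : s ≠ 0 := by
    rcases Decidable.em (Even (k+1)) with h | h
    · rw [hs, if_pos h]; exact he
    · rw [hs, if_neg h]; exact hne
  rw [Finset.mem_union, mem_image_app, mem_image_app, hA, hB, cond_snoc, dim_init]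
  by_cases hL : x (Fin.last n) = 0
  · rw [if_pos hL]
    constructor
    · rintro (⟨_, hy, hc⟩ | ⟨hsx, _, _⟩)
      · exact ⟨by omega, hc, fun hne => absurd hL hne⟩
      · exact absurd (hsx ▸ hL) hs0
    · rintro ⟨hd, hc, _⟩
      exact Or.inl ⟨hL, by omega, hc⟩
  · rw [if_neg hL]
    constructor
    · rintro (⟨h0, _, _⟩ | ⟨hsx, hy, hc⟩)
      · exact absurd h0 hL
      · refine ⟨by omega, hc, fun _ => ⟨fun hev => ?_, fun hod => ?_⟩⟩
        · rw [hy] at hev; rw [hsx, hs, if_pos hev]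
        · rw [hy] at hod; rw [hsx, hs, if_neg (Nat.not_even_iff_odd.mpr hod)]
    · rintro ⟨hd, hc, hlast⟩
      have hy : dim (Fin.init x) = k + 1 := by omega
      refine Or.inr ⟨?_, hy, hc⟩
      rcases Nat.even_or_odd (k+1) with h | h
      · rw [(hlast hL).1 (hy ▸ h), hs, if_pos h]
      · rw [(hlast hL).2 (hy ▸ h), hs, if_neg (Nat.not_even_iff_odd.mpr h)]

lemma base_char {n : ℕ} (e : SignType) (he : e ≠ 0) (x : Fin n → SignType) :
    x ∈ ({fun _ => e} : Finset (Fin n → SignType)) ↔ dim x = 0 ∧ Cond e x := by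
  rw [Finset.mem_singleton]
  constructor
  · rintro rfl
    refine ⟨by simp [dim, he], fun i hi => ?_⟩
    have hc : cnt (fun _ => e) i = 0 := by simp [cnt, he]
    rw [hc]
    exact ⟨fun _ => rfl, fun h => absurd h (by simp)⟩
  · rintro ⟨hd, hc⟩
    unfold dim at hd
    have hz : ∀ j, x j ≠ 0 := by
      intro j hj
      have hj' : j ∈ Finset.univ.filter fun i => x i = 0 := by simp [hj]
      rw [Finset.card_eq_zero.mp hd] at hj'
      simp at hj'
    funext i
    have hcnt : cnt x i = 0 := by
      unfold cnt
      rw [Finset.card_eq_zero, Finset.filter_eq_empty_iff]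
      exact fun j _ => fun h => hz j h.2
    exact (hc i (hz i)).1 (by rw [hcnt]; exact Even.zero)

lemma top_char {n : ℕ} (e : SignType) (x : Fin n → SignType) :
    x ∈ ({fun _ => 0} : Finset (Fin n → SignType)) ↔ dim x = n ∧ Cond e x := by
  rw [Finset.mem_singleton]
  constructor
  · rintro rfl
    exact ⟨by simp [dim], fun i hi => absurd rfl hi⟩
  · rintro ⟨hd, _⟩
    unfold dim at hd
    have huniv : (Finset.univ.filter fun i => x i = 0) = Finset.univ := by
      apply Finset.eq_univ_of_card
      rw [Fintype.card_fin]; exact hd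
    funext i
    have hi : i ∈ Finset.univ.filter fun i => x i = 0 := huniv.symm ▸ Finset.mem_univ i
    exact (Finset.mem_filter.mp hi).2

lemma main : ∀ n k, k ≤ n → ∀ x : Fin n → SignType,
    (x ∈ Psi k n ↔ dim x = k ∧ Cond (-1) x) ∧
    (x ∈ Omega k n ↔ dim x = k ∧ Cond 1 x) := by
  intro n
  induction n with
  | zero =>
    intro k hk x
    obtain rfl : k = 0 := Nat.le_zero.mp hk
    have hx : x = fun i => i.elim0 := funext fun i => i.elim0
    subst hx
    have hd : dim (fun i : Fin 0 => i.elim0) = 0 := by simp [dim]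
    have hc : ∀ e, Cond e (fun i : Fin 0 => i.elim0) := fun e i => i.elim0
    constructor <;> constructor
    · exact fun _ => ⟨hd, hc _⟩
    · intro _; rw [Psi]; exact Finset.mem_singleton_self _
    · exact fun _ => ⟨hd, hc _⟩
    · intro _; rw [Omega]; exact Finset.mem_singleton_self _
  | succ n ih =>
    intro k hk x
    match k with
    | 0 =>
      exact ⟨base_char (-1) (by decide) x, base_char 1 (by decide) x⟩
    | k + 1 =>
      rcases lt_or_ge k n with hlt | hge
      · have hif : ¬ (n + 1 ≤ k + 1) := by omega
        have hAp := fun y => (ih k (le_of_lt hlt) y).1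
        have hBp := fun y => (ih (k+1) hlt y).1
        have hAo := fun y => (ih k (le_of_lt hlt) y).2
        have hBo := fun y => (ih (k+1) hlt y).2
        constructor
        · show x ∈ Psi (k+1) (n+1) ↔ _
          rw [Psi]
          rw [if_neg hif]
          rcases Decidable.em (Even (k+1)) with h | h
          · rw [if_pos h]
            exact union_char (-1) (by decide) hAp hBp (-1) (by rw [if_pos h]) x
          · rw [if_neg h]
            exact union_char (-1) (by decide) hAp hBp 1 (by rw [if_neg h]; decide) x
        · show x ∈ Omega (k+1) (n+1) ↔ _
          rw [Omega]
          rw [if_neg hif]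
          rcases Decidable.em (Even (k+1)) with h | h
          · rw [if_pos h, Finset.union_comm]
            exact union_char 1 (by decide) hAo hBo 1 (by rw [if_pos h]) x
          · rw [if_neg h, Finset.union_comm]
            exact union_char 1 (by decide) hAo hBo (-1) (by rw [if_neg h]) x
      · have hkn : k = n := by omega
        subst hkn
        have hif : k + 1 ≤ k + 1 := le_refl _
        constructor
        · show x ∈ Psi (k+1) (k+1) ↔ _
          rw [Psi, if_pos hif]
          exact top_char (-1) x
        · show x ∈ Omega (k+1) (k+1) ↔ _
          rw [Omega, if_pos hif]
          exact top_char 1 x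

/-- Closed-form characterization of the source and target faces: membership in `ψ k n`
(resp. `ω k n`) is determined by the parity of the number of `0`'s preceding
each nonzero letter. -/
theorem stmt_4 (n k : ℕ) (hk : k ≤ n) (x : Fin n → SignType) :
    (x ∈ Psi k n ↔ dim x = k ∧ ∀ i, x i ≠ 0 →
      ((Even (Finset.univ.filter fun j => j < i ∧ x j = 0).card → x i = -1) ∧
       (Odd (Finset.univ.filter fun j => j < i ∧ x j = 0).card → x i = 1))) ∧
    (x ∈ Omega k n ↔ dim x = k ∧ ∀ i, x i ≠ 0 →
      ((Even (Finset.univ.filter fun j => j < i ∧ x j = 0).card → x i = 1) ∧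
       (Odd (Finset.univ.filter fun j => j < i ∧ x j = 0).card → x i = -1))) := by
  have h := main n k hk x
  constructor
  · rw [h.1]
    unfold Cond cnt
    norm_num
  · rw [h.2]
    unfold Cond cnt
    norm_num
end

section
/- For every n ≥ 2 and every k with 1 ≤ k ≤ n-1, the source disk and target disk in dimension k meet exactly in the (k-1)-dimensional sphere of lower faces: (⋃_{x ∈ ψ k n} geom x) ∩ (⋃_{x ∈ ω k n} geom x) = ⋃_{x ∈ ψ (k-1) n ∪ ω (k-1) n} geom x. -/
def SU (k n : ℕ) : Set (Fin n → ℝ) := ⋃ x ∈ Psi k n, geom x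
def TU (k n : ℕ) : Set (Fin n → ℝ) := ⋃ x ∈ Omega k n, geom x

def cube (n : ℕ) : Set (Fin n → ℝ) := {p | ∀ i, p i ∈ Set.Icc (-1:ℝ) 1}

def E {n : ℕ} (s : SignType) (A : Set (Fin n → ℝ)) : Set (Fin (n+1) → ℝ) :=
  {p | (fun i => p i.castSucc) ∈ A ∧ (s = 0 → p (Fin.last n) ∈ Set.Icc (-1:ℝ) 1) ∧
        (s ≠ 0 → p (Fin.last n) = (s : ℝ))}

lemma geom_app {n : ℕ} (s : SignType) (x : Fin n → SignType) :
    geom (app s x) = E s (geom x) := by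
  ext p
  constructor
  · intro h
    refine ⟨fun i => ?_, ?_, ?_⟩
    · simpa [app, Fin.snoc_castSucc] using h i.castSucc
    · intro hs; simpa [app, Fin.snoc_last, hs] using (h (Fin.last n)).1
    · intro hs; simpa [app, Fin.snoc_last, hs] using (h (Fin.last n)).2
  · rintro ⟨h1, h2, h3⟩ i
    refine Fin.lastCases ?_ (fun j => ?_) i
    · constructor
      · intro hz; simp only [app, Fin.snoc_last] at hz ⊢; exact h2 hz
      · intro hz; simp only [app, Fin.snoc_last] at hz ⊢; exact h3 hz
    · constructor
      · intro hz; simp only [app, Fin.snoc_castSucc] at hz; exact (h1 j).1 hz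
      · intro hz; simp only [app, Fin.snoc_castSucc] at hz ⊢; exact (h1 j).2 hz

lemma E_iUnion_image {n : ℕ} (s : SignType) (F : Finset (Fin n → SignType)) :
    ⋃ x ∈ F.image (app s), geom x = E s (⋃ x ∈ F, geom x) := by
  ext p
  simp only [Set.mem_iUnion, Finset.mem_image, exists_prop]
  constructor
  · rintro ⟨y, ⟨x, hx, rfl⟩, hp⟩
    rw [geom_app] at hp
    exact ⟨Set.mem_iUnion₂.2 ⟨x, hx, hp.1⟩, hp.2⟩
  · rintro ⟨hA, hc⟩
    obtain ⟨x, hx, hp⟩ := Set.mem_iUnion₂.1 hA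
    exact ⟨app s x, ⟨x, hx, rfl⟩, (geom_app s x) ▸ (⟨hp, hc⟩ : p ∈ E s (geom x))⟩

lemma E_mono {n : ℕ} (s : SignType) {A B : Set (Fin n → ℝ)} (h : A ⊆ B) : E s A ⊆ E s B :=
  fun p hp => ⟨h hp.1, hp.2⟩

lemma E_union {n : ℕ} (s : SignType) (A B : Set (Fin n → ℝ)) :
    E s (A ∪ B) = E s A ∪ E s B := by
  ext p; simp only [E, Set.mem_union, Set.mem_setOf_eq]; tauto

lemma E_empty {n : ℕ} (s : SignType) : E s (∅ : Set (Fin n → ℝ)) = ∅ := by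
  ext p; simp [E]

lemma E_inter_same {n : ℕ} (s : SignType) (A B : Set (Fin n → ℝ)) :
    E s A ∩ E s B = E s (A ∩ B) := by
  ext p; simp only [E, Set.mem_inter_iff, Set.mem_setOf_eq]; tauto

lemma E_zero_inter {n : ℕ} (s : SignType) (hs : s ≠ 0) (A B : Set (Fin n → ℝ)) :
    E 0 A ∩ E s B = E s (A ∩ B) := by
  ext p
  simp only [E, Set.mem_inter_iff, Set.mem_setOf_eq]
  constructor
  · rintro ⟨⟨hA, _, _⟩, hB, h2, h3⟩; exact ⟨⟨hA, hB⟩, h2, h3⟩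
  · rintro ⟨⟨hA, hB⟩, h2, h3⟩
    have hlast := h3 hs
    refine ⟨⟨hA, fun _ => ?_, fun h => absurd rfl h⟩, hB, h2, h3⟩
    rw [hlast]
    rcases s with _ | _ | _ <;> simp_all <;> norm_num

lemma E_inter_zero {n : ℕ} (s : SignType) (hs : s ≠ 0) (A B : Set (Fin n → ℝ)) :
    E s A ∩ E 0 B = E s (A ∩ B) := by
  rw [Set.inter_comm, E_zero_inter s hs, Set.inter_comm]

lemma E_one_inter_neg {n : ℕ} (A B : Set (Fin n → ℝ)) :
    E 1 A ∩ E (-1) B = ∅ := by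
  ext p
  simp only [E, Set.mem_inter_iff, Set.mem_setOf_eq, Set.mem_empty_iff_false, iff_false]
  rintro ⟨⟨_, _, h1⟩, _, _, h2⟩
  have e1 := h1 (by decide)
  have e2 := h2 (by decide)
  rw [e1] at e2
  norm_num at e2

lemma E_neg_inter_one {n : ℕ} (A B : Set (Fin n → ℝ)) :
    E (-1) A ∩ E 1 B = ∅ := by
  rw [Set.inter_comm, E_one_inter_neg]

lemma sign_coe_mem (s : SignType) : (s : ℝ) ∈ Set.Icc (-1:ℝ) 1 := by
  rcases s with _ | _ | _
  · show ((0 : SignType) : ℝ) ∈ _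
    norm_num
  · show ((-1 : SignType) : ℝ) ∈ _
    norm_num
  · show ((1 : SignType) : ℝ) ∈ _
    norm_num

lemma geom_subset_cube {n : ℕ} (x : Fin n → SignType) : geom x ⊆ cube n := by
  intro p hp i
  by_cases hz : x i = 0
  · exact (hp i).1 hz
  · rw [(hp i).2 hz]
    exact sign_coe_mem (x i)

lemma SU_subset_cube (k n : ℕ) : SU k n ⊆ cube n := by
  refine Set.iUnion₂_subset fun x _ => geom_subset_cube x

lemma TU_subset_cube (k n : ℕ) : TU k n ⊆ cube n := by
  refine Set.iUnion₂_subset fun x _ => geom_subset_cube x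

lemma geom_const_zero (n : ℕ) : geom (fun _ : Fin n => (0 : SignType)) = cube n := by
  ext p; simp [geom, cube]

lemma geom_fin0 (x : Fin 0 → SignType) : geom x = Set.univ := by
  ext p
  simp only [Set.mem_univ, iff_true]
  intro i
  exact i.elim0

lemma cube_fin0 : cube 0 = Set.univ := by
  ext p
  simp only [Set.mem_univ, iff_true]
  intro i
  exact i.elim0

lemma SU_fin0 (k : ℕ) : SU k 0 = Set.univ := by
  have : Psi k 0 = {fun i => i.elim0} := by cases k <;> rfl
  rw [SU, this, Finset.set_biUnion_singleton, geom_fin0]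

lemma TU_fin0 (k : ℕ) : TU k 0 = Set.univ := by
  have : Omega k 0 = {fun i => i.elim0} := by cases k <;> rfl
  rw [TU, this, Finset.set_biUnion_singleton, geom_fin0]

lemma SU_top {k n : ℕ} (h : n ≤ k) : SU k n = cube n := by
  cases n with
  | zero => rw [SU_fin0, cube_fin0]
  | succ m =>
    obtain ⟨k', rfl⟩ : ∃ k', k = k' + 1 := ⟨k - 1, by omega⟩
    have : Psi (k'+1) (m+1) = {fun _ => 0} := by rw [Psi, if_pos h]
    rw [SU, this, Finset.set_biUnion_singleton, geom_const_zero]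

lemma TU_top {k n : ℕ} (h : n ≤ k) : TU k n = cube n := by
  cases n with
  | zero => rw [TU_fin0, cube_fin0]
  | succ m =>
    obtain ⟨k', rfl⟩ : ∃ k', k = k' + 1 := ⟨k - 1, by omega⟩
    have : Omega (k'+1) (m+1) = {fun _ => 0} := by rw [Omega, if_pos h]
    rw [TU, this, Finset.set_biUnion_singleton, geom_const_zero]

lemma SU_zero (n : ℕ) : SU 0 n = geom (fun _ : Fin n => (-1 : SignType)) := by
  cases n with
  | zero => rw [SU_fin0, geom_fin0]
  | succ m =>
    rw [SU, show Psi 0 (m+1) = {fun _ => -1} from rfl, Finset.set_biUnion_singleton]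

lemma TU_zero (n : ℕ) : TU 0 n = geom (fun _ : Fin n => (1 : SignType)) := by
  cases n with
  | zero => rw [TU_fin0, geom_fin0]
  | succ m =>
    rw [TU, show Omega 0 (m+1) = {fun _ => 1} from rfl, Finset.set_biUnion_singleton]

lemma app_const {n : ℕ} (s : SignType) :
    app s (fun _ : Fin n => s) = fun _ : Fin (n+1) => s := by
  funext i
  refine Fin.lastCases ?_ (fun j => ?_) i
  · rw [app, Fin.snoc_last]
  · rw [app, Fin.snoc_castSucc]

lemma SU_zero_succ (m : ℕ) : SU 0 (m+1) = E (-1) (SU 0 m) := by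
  rw [SU_zero, SU_zero, ← app_const, geom_app]

lemma TU_zero_succ (m : ℕ) : TU 0 (m+1) = E 1 (TU 0 m) := by
  rw [TU_zero, TU_zero, ← app_const, geom_app]

lemma SU_zero_inter_TU_zero {m : ℕ} (hm : 1 ≤ m) : SU 0 m ∩ TU 0 m = ∅ := by
  rw [SU_zero, TU_zero]
  ext p
  simp only [Set.mem_inter_iff, Set.mem_empty_iff_false, iff_false]
  rintro ⟨h1, h2⟩
  have e1 := (h1 ⟨0, hm⟩).2 (by simp)
  have e2 := (h2 ⟨0, hm⟩).2 (by simp)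
  rw [e1] at e2
  norm_num at e2

lemma SU_succ_even {k m : ℕ} (h : k + 1 ≤ m) (he : Even (k+1)) :
    SU (k+1) (m+1) = E 0 (SU k m) ∪ E (-1) (SU (k+1) m) := by
  rw [SU, Psi, if_neg (by omega), if_pos he, Finset.set_biUnion_union,
    E_iUnion_image, E_iUnion_image]
  rfl

lemma SU_succ_odd {k m : ℕ} (h : k + 1 ≤ m) (he : ¬ Even (k+1)) :
    SU (k+1) (m+1) = E 0 (SU k m) ∪ E 1 (SU (k+1) m) := by
  rw [SU, Psi, if_neg (by omega), if_neg he, Finset.set_biUnion_union,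
    E_iUnion_image, E_iUnion_image]
  rfl

lemma TU_succ_even {k m : ℕ} (h : k + 1 ≤ m) (he : Even (k+1)) :
    TU (k+1) (m+1) = E 1 (TU (k+1) m) ∪ E 0 (TU k m) := by
  rw [TU, Omega, if_neg (by omega), if_pos he, Finset.set_biUnion_union,
    E_iUnion_image, E_iUnion_image]
  rfl

lemma TU_succ_odd {k m : ℕ} (h : k + 1 ≤ m) (he : ¬ Even (k+1)) :
    TU (k+1) (m+1) = E (-1) (TU (k+1) m) ∪ E 0 (TU k m) := by
  rw [TU, Omega, if_neg (by omega), if_neg he, Finset.set_biUnion_union,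
    E_iUnion_image, E_iUnion_image]
  rfl

lemma incl : ∀ n k, SU k n ⊆ TU (k+1) n ∧ TU k n ⊆ SU (k+1) n := by
  intro n
  induction n with
  | zero =>
    intro k
    rw [SU_fin0, TU_fin0, SU_fin0, TU_fin0]
    exact ⟨subset_rfl, subset_rfl⟩
  | succ m ih =>
    intro k
    by_cases hk : m + 1 ≤ k + 1
    · rw [TU_top hk, SU_top hk]
      exact ⟨SU_subset_cube k (m+1), TU_subset_cube k (m+1)⟩
    · have hkm : k + 1 ≤ m := by omega
      cases k with
      | zero =>
        constructor
        · rw [SU_zero_succ, TU_succ_odd hkm (by decide)]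
          exact Set.subset_union_of_subset_left (E_mono _ (ih 0).1) _
        · rw [TU_zero_succ, SU_succ_odd hkm (by decide)]
          exact Set.subset_union_of_subset_right (E_mono _ (ih 0).2) _
      | succ k' =>
        have hk'm : k' + 1 ≤ m := by omega
        rcases Nat.even_or_odd (k'+2) with he | ho
        · have hodd : ¬ Even (k'+1) := by
            simp only [Nat.even_iff] at he ⊢; omega
          constructor
          · rw [SU_succ_odd hk'm hodd, TU_succ_even hkm he]
            refine Set.union_subset ?_ ?_
            · exact Set.subset_union_of_subset_right (E_mono _ (ih k').1) _
            · exact Set.subset_union_of_subset_left (E_mono _ (ih (k'+1)).1) _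
          · rw [TU_succ_odd hk'm hodd, SU_succ_even hkm he]
            refine Set.union_subset ?_ ?_
            · exact Set.subset_union_of_subset_right (E_mono _ (ih (k'+1)).2) _
            · exact Set.subset_union_of_subset_left (E_mono _ (ih k').2) _
        · have heven : Even (k'+1) := by
            simp only [Nat.odd_iff] at ho
            simp only [Nat.even_iff]; omega
          have hodd2 : ¬ Even (k'+2) := by
            simp only [Nat.odd_iff] at ho
            simp only [Nat.even_iff]; omega
          constructor
          · rw [SU_succ_even hk'm heven, TU_succ_odd hkm hodd2]
            refine Set.union_subset ?_ ?_
            · exact Set.subset_union_of_subset_right (E_mono _ (ih k').1) _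
            · exact Set.subset_union_of_subset_left (E_mono _ (ih (k'+1)).1) _
          · rw [TU_succ_even hk'm heven, SU_succ_odd hkm hodd2]
            refine Set.union_subset ?_ ?_
            · exact Set.subset_union_of_subset_right (E_mono _ (ih (k'+1)).2) _
            · exact Set.subset_union_of_subset_left (E_mono _ (ih k').2) _

lemma mainlem : ∀ n k, k + 2 ≤ n → SU (k+1) n ∩ TU (k+1) n = SU k n ∪ TU k n := by
  intro n
  induction n with
  | zero => intro k h; omega
  | succ m ih =>
    intro k hk
    have hkm : k + 1 ≤ m := by omega
    have hAC : SU k m ∩ TU (k+1) m = SU k m := Set.inter_eq_left.2 (incl m k).1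
    have hBD : SU (k+1) m ∩ TU k m = TU k m := Set.inter_eq_right.2 (incl m k).2
    cases k with
    | zero =>
      have hAD : SU 0 m ∩ TU 0 m = ∅ := SU_zero_inter_TU_zero (by omega)
      rw [SU_succ_odd hkm (by decide), TU_succ_odd hkm (by decide),
        SU_zero_succ, TU_zero_succ,
        Set.union_inter_distrib_right, Set.inter_union_distrib_left,
        Set.inter_union_distrib_left,
        E_zero_inter (-1) (by decide), E_inter_same,
        E_one_inter_neg, E_inter_zero 1 (by decide),
        hAC, hAD, hBD, E_empty]
      ext p
      simp only [Set.mem_union, Set.mem_empty_iff_false]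
      tauto
    | succ k' =>
      have hk'm : k' + 1 ≤ m := by omega
      have ih' : SU (k'+1) m ∩ TU (k'+1) m = SU k' m ∪ TU k' m := ih k' (by omega)
      rcases Nat.even_or_odd (k'+2) with he | ho
      · have hodd : ¬ Even (k'+1) := by
            simp only [Nat.even_iff] at he ⊢; omega
        rw [SU_succ_even hkm he, TU_succ_even hkm he,
          SU_succ_odd hk'm hodd, TU_succ_odd hk'm hodd,
          Set.union_inter_distrib_right, Set.inter_union_distrib_left,
          Set.inter_union_distrib_left,
          E_zero_inter 1 (by decide), E_inter_same,
          E_neg_inter_one, E_inter_zero (-1) (by decide),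
          hAC, hBD, ih', E_union]
        ext p
        simp only [Set.mem_union, Set.mem_empty_iff_false]
        tauto
      · have heven : Even (k'+1) := by
          simp only [Nat.odd_iff] at ho
          simp only [Nat.even_iff]; omega
        have hodd2 : ¬ Even (k'+2) := by
          simp only [Nat.odd_iff] at ho
          simp only [Nat.even_iff]; omega
        rw [SU_succ_odd hkm hodd2, TU_succ_odd hkm hodd2,
          SU_succ_even hk'm heven, TU_succ_even hk'm heven,
          Set.union_inter_distrib_right, Set.inter_union_distrib_left,
          Set.inter_union_distrib_left,
          E_zero_inter (-1) (by decide), E_inter_same,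
          E_one_inter_neg, E_inter_zero 1 (by decide),
          hAC, hBD, ih', E_union]
        ext p
        simp only [Set.mem_union, Set.mem_empty_iff_false]
        tauto

/-- The source and target `k`-disks meet exactly in the `(k-1)`-sphere of lower faces. -/
theorem stmt_7 (n k : ℕ) (hn : 2 ≤ n) (hk1 : 1 ≤ k) (hk2 : k ≤ n - 1) :
    (⋃ x ∈ Psi k n, geom x) ∩ (⋃ x ∈ Omega k n, geom x) =
      ⋃ x ∈ Psi (k - 1) n ∪ Omega (k - 1) n, geom x := by
  obtain ⟨k', rfl⟩ : ∃ k', k = k' + 1 := ⟨k - 1, by omega⟩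
  rw [show k' + 1 - 1 = k' from rfl, Finset.set_biUnion_union]
  exact mainlem n k' (by omega)
end

section
/- For every n ≥ 1, the union of the geometric realizations of the source and target (n-1)-faces equals the topological boundary of the cube: ⋃_{x ∈ ψ (n-1) n ∪ ω (n-1) n} geom x = frontier (Set.univ.pi (fun _ : Fin n => Set.Icc (-1 : ℝ) 1)) in the space Fin n → ℝ. -/
/-!
The words of `ψ (n-1) n ∪ ω (n-1) n` are exactly the words with a single nonzero letter: the
recursion appends `0` to the corresponding words for the `(n-1)`-cube and adds the two words
`0…0(-1)` and `0…01` (the parity of `n - 1` only decides which of the two is a source face).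
The realization of the word with letter `±1` at `i` is the facet `{p i = ±1}` of the cube, and
the frontier of the closed cube is the union of these facets.
-/

def IsFacet {n : ℕ} (x : Fin n → SignType) : Prop :=
  ∃ i, x i ≠ 0 ∧ ∀ j, j ≠ i → x j = 0

lemma app_inj_s8 {n : ℕ} {s t : SignType} {x y : Fin n → SignType} :
    app s x = app t y ↔ x = y ∧ s = t :=
  Fin.snoc_inj

lemma isFacet_app_zero {n : ℕ} (x : Fin n → SignType) : IsFacet (app 0 x) ↔ IsFacet x := by
  simp [IsFacet, app, Fin.exists_fin_succ', Fin.forall_fin_succ', Fin.castSucc_ne_last,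
    Fin.castSucc_inj]

lemma isFacet_app_of_ne_zero {n : ℕ} {s : SignType} (hs : s ≠ 0) (x : Fin n → SignType) :
    IsFacet (app s x) ↔ x = 0 := by
  simp [IsFacet, app, Fin.forall_fin_succ', Fin.castSucc_ne_last, hs, funext_iff]

lemma isFacet_single {n : ℕ} (i : Fin n) {s : SignType} (hs : s ≠ 0) :
    IsFacet (Pi.single i s) :=
  ⟨i, by simpa using hs, fun j hj => by simp [hj]⟩

lemma Psi_succ_self (k : ℕ) : Psi (k + 1) (k + 1) = {0} := by
  rw [Psi, if_pos le_rfl]; rfl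

lemma Omega_succ_self (k : ℕ) : Omega (k + 1) (k + 1) = {0} := by
  rw [Omega, if_pos le_rfl]; rfl

lemma Psi_union_Omega_succ (k : ℕ) :
    Psi (k + 1) (k + 2) ∪ Omega (k + 1) (k + 2) =
      (Psi k (k + 1) ∪ Omega k (k + 1)).image (app 0) ∪ {app (-1) 0, app 1 0} := by
  have hlt : ¬k + 2 ≤ k + 1 := by omega
  rw [Psi, Omega, if_neg hlt, if_neg hlt, Psi_succ_self, Omega_succ_self]
  ext x
  split_ifs <;> simp only [Finset.mem_union, Finset.mem_image, Finset.image_singleton,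
    Finset.mem_singleton, Finset.mem_insert, or_and_right, exists_or, or_assoc, or_comm,
    or_left_comm]

lemma mem_Psi_union_Omega_iff {n : ℕ} (x : Fin (n + 1) → SignType) :
    x ∈ Psi n (n + 1) ∪ Omega n (n + 1) ↔ IsFacet x := by
  induction n with
  | zero => revert x; unfold IsFacet; decide
  | succ k ih =>
    obtain ⟨y, s, rfl⟩ : ∃ y s, x = app s y :=
      ⟨Fin.init x, x (Fin.last _), (Fin.snoc_init_self x).symm⟩
    rw [Psi_union_Omega_succ]
    rcases s with _ | _ | _ <;> simp [app_inj_s8, ih, isFacet_app_zero, isFacet_app_of_ne_zero]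

lemma mem_frontier_pi_Icc {ι α : Type*} [Finite ι] [LinearOrder α] [TopologicalSpace α]
    [OrderTopology α] [DenselyOrdered α] [NoMinOrder α] [NoMaxOrder α] {a b p : ι → α} :
    p ∈ frontier (Set.univ.pi fun i => Set.Icc (a i) (b i)) ↔
      (∀ i, p i ∈ Set.Icc (a i) (b i)) ∧ ∃ i, p i = a i ∨ p i = b i := by
  rw [(isClosed_set_pi fun _ _ => isClosed_Icc).frontier_eq, interior_pi_set Set.finite_univ]
  simp only [interior_Icc, Set.mem_sdiff, Set.mem_univ_pi, not_forall]
  refine and_congr_right fun hp => exists_congr fun i => ?_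
  simpa [hp i] using Set.ext_iff.mp (Set.Icc_sdiff_Ioo_same ((hp i).1.trans (hp i).2)) (p i)

lemma SignType.coe_mem_Icc (s : SignType) : (s : ℝ) ∈ Set.Icc (-1 : ℝ) 1 := by
  rcases s with _ | _ | _ <;> norm_num

lemma geom_subset_cube_s8 {n : ℕ} (x : Fin n → SignType) :
    geom x ⊆ Set.univ.pi fun _ => Set.Icc (-1 : ℝ) 1 := by
  intro p hp i _
  by_cases hi : x i = 0
  · exact (hp i).1 hi
  · rw [(hp i).2 hi]; exact SignType.coe_mem_Icc _

lemma eq_neg_one_or_one_of_mem_geom {n : ℕ} {x : Fin n → SignType} {p : Fin n → ℝ}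
    (hp : p ∈ geom x) {i : Fin n} (hi : x i ≠ 0) : p i = -1 ∨ p i = 1 := by
  rw [(hp i).2 hi]
  rcases h : x i with _ | _ | _ <;> simp_all

lemma mem_geom_single_sign {n : ℕ} {p : Fin n → ℝ} (hp : ∀ j, p j ∈ Set.Icc (-1 : ℝ) 1)
    {i : Fin n} (hi : p i = -1 ∨ p i = 1) : p ∈ geom (Pi.single i (SignType.sign (p i))) := by
  intro j
  rcases eq_or_ne j i with rfl | hj
  · rcases hi with h | h <;> simp [h]
  · simp [hj, hp j]

/-- The source and target `(n-1)`-faces together realize the topological boundary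
of the cube `[-1,1]^n`. -/
theorem stmt_8 (n : ℕ) (hn : 1 ≤ n) :
    (⋃ x ∈ Psi (n - 1) n ∪ Omega (n - 1) n, geom x) =
      frontier (Set.univ.pi fun _ : Fin n => Set.Icc (-1 : ℝ) 1) := by
  obtain ⟨m, rfl⟩ := Nat.exists_eq_add_of_le' hn
  ext p
  simp only [Set.mem_iUnion, exists_prop, Nat.add_sub_cancel, mem_Psi_union_Omega_iff,
    mem_frontier_pi_Icc]
  constructor
  · rintro ⟨x, ⟨i, hi, -⟩, hp⟩
    exact ⟨fun j => geom_subset_cube_s8 x hp j trivial, i, eq_neg_one_or_one_of_mem_geom hp hi⟩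
  · rintro ⟨hp, i, hi⟩
    refine ⟨_, isFacet_single i ?_, mem_geom_single_sign hp hi⟩
    rcases hi with h | h <;> simp [h]
end

section
/- Slicing the corner of the cube: for every n ≥ 1 and every word x : Fin n → SignType, the geometric realization geom x meets the hyperplane H = {p : Fin n → ℝ | ∑ i, p i = n - 1} if and only if x has no entry equal to -1 and at least one entry equal to 0. (Thus the sub-cubes meeting the slicing hyperplane correspond exactly to the nonempty sub-simplices of the (n-1)-simplex, encoded by words in 0 and + containing at least one 0.) -/
/-- A sub-cube meets the slicing hyperplane `∑ p i = n - 1` iff its word has no `-1`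
and at least one `0`. -/
theorem stmt_14 (n : ℕ) (hn : 1 ≤ n) (x : Fin n → SignType) :
    (geom x ∩ {p : Fin n → ℝ | ∑ i, p i = (n : ℝ) - 1}).Nonempty ↔
      (∀ i, x i ≠ -1) ∧ ∃ i, x i = 0 := by
  constructor
  · rintro ⟨p, hp, hsum⟩
    simp only [Set.mem_setOf_eq] at hsum
    have h1 : ∀ j, p j ≤ 1 := by
      intro j
      rcases eq_or_ne (x j) 0 with h | h
      · exact ((hp j).1 h).2
      · rw [(hp j).2 h]
        cases x j <;> norm_num
    have hno : ∀ i, x i ≠ -1 := by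
      intro i hx
      have hpi : p i = -1 := by
        have := (hp i).2 (by rw [hx]; decide)
        rw [hx] at this; simpa using this
      have hs : ∑ j ∈ Finset.univ.erase i, p j ≤ (n : ℝ) - 1 := by
        calc ∑ j ∈ Finset.univ.erase i, p j ≤ ∑ _j ∈ Finset.univ.erase i, (1 : ℝ) :=
              Finset.sum_le_sum fun j _ => h1 j
          _ = (n : ℝ) - 1 := by
              simp [Finset.card_erase_of_mem, Nat.cast_sub hn]
      have := Finset.add_sum_erase Finset.univ p (Finset.mem_univ i)
      rw [hpi, hsum] at this
      linarith
    refine ⟨hno, ?_⟩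
    by_contra hz
    push_neg at hz
    have hall : ∀ j, p j = 1 := by
      intro j
      have hx1 : x j = 1 := by
        have := hno j; have := hz j
        cases h : x j <;> simp_all
      have := (hp j).2 (by rw [hx1]; decide)
      rw [hx1] at this; simpa using this
    rw [Finset.sum_congr rfl (fun j _ => hall j)] at hsum
    simp at hsum
    linarith
  · rintro ⟨hno, i₀, h0⟩
    refine ⟨fun j => if j = i₀ then 0 else 1, ?_, ?_⟩
    · intro j
      constructor
      · intro _
        by_cases h : j = i₀ <;> simp [h]
      · intro h
        have hj : j ≠ i₀ := fun e => h (e ▸ h0)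
        have hx1 : x j = 1 := by
          have := hno j
          cases hxj : x j <;> simp_all
        simp [hj, hx1]
    · simp only [Set.mem_setOf_eq]
      have : ∑ j, (if j = i₀ then (0:ℝ) else 1) =
          ∑ j, ((1:ℝ) - if j = i₀ then 1 else 0) := by
        apply Finset.sum_congr rfl
        intro j _
        by_cases h : j = i₀ <;> simp [h]
      rw [this, Finset.sum_sub_distrib]
      simp
end

section
/- For every n ≥ 1 and every word x : Fin n → SignType with no entry equal to -1 and with dimension k ≥ 1, the slice geom x ∩ H (with the subspace topology from Fin n → ℝ) is homeomorphic to the standard simplex stdSimplex ℝ (Fin k); i.e., a k-dimensional sub-cube with word in 0's and +'s is sliced by H in a simplex of dimension k - 1. -/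
/-!
On a face `geom x` whose word has no `-` letter every fixed coordinate equals `1`, so the
hyperplane `∑ pᵢ = n - 1` cuts it in `{p | p ≤ 1, ∑_{xᵢ = 0} (1 - pᵢ) = 1}`. The substitution
`tᵢ = 1 - pᵢ` on the free coordinates identifies this slice with the standard simplex on the
`k` free coordinates; the bounds `pᵢ ≥ -1` come for free, since `tᵢ ≤ ∑ t = 1`.
-/

theorem Fintype.sum_subtype_eq_sum_of_eq_zero {ι M : Type*} [Fintype ι] [AddCommMonoid M]
    (p : ι → Prop) [DecidablePred p] {f : ι → M} (hf : ∀ i, ¬p i → f i = 0) :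
    ∑ i : {i // p i}, f i = ∑ i, f i := by
  rw [← Fintype.sum_subtype_add_sum_subtype p f,
    Fintype.sum_eq_zero (fun i : {i // ¬p i} ↦ f i) fun i ↦ hf i i.2, add_zero]

namespace stdSimplex

variable {S : Type*} [Semiring S] [PartialOrder S] [IsOrderedRing S] [TopologicalSpace S]
  [IsTopologicalSemiring S] {X Y : Type*} [Fintype X] [Fintype Y]

noncomputable def homeomorphCongr (e : X ≃ Y) : stdSimplex S X ≃ₜ stdSimplex S Y where
  toFun := map e
  invFun := map e.symm
  left_inv s := by rw [map_comp_apply, e.symm_comp_self, map_id_apply]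
  right_inv s := by rw [map_comp_apply, e.self_comp_symm, map_id_apply]
  continuous_toFun := continuous_map e
  continuous_invFun := continuous_map e.symm

end stdSimplex

section CornerSlice

variable {ι : Type*} [Fintype ι] (p : ι → Prop) [DecidablePred p]

def cornerSlice : Set (ι → ℝ) :=
  {v | (∀ i, ¬p i → v i = 1) ∧ (∀ i, v i ≤ 1) ∧ ∑ i, v i = Fintype.card ι - 1}

theorem sum_one_sub (v : ι → ℝ) : ∑ i, (1 - v i) = Fintype.card ι - ∑ i, v i := by
  simp [Finset.sum_sub_distrib]

variable {p}

theorem one_sub_mem_stdSimplex {v : ι → ℝ} (hv : v ∈ cornerSlice p) :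
    (fun i : {i // p i} ↦ 1 - v i) ∈ stdSimplex ℝ {i // p i} := by
  obtain ⟨hfixed, hle, hsum⟩ := hv
  refine ⟨fun i ↦ sub_nonneg.2 (hle i), ?_⟩
  rw [Fintype.sum_subtype_eq_sum_of_eq_zero p (f := fun i ↦ 1 - v i)
    fun i hi ↦ by rw [hfixed i hi, sub_self], sum_one_sub, hsum, sub_sub_cancel]

theorem dite_one_sub_mem_cornerSlice {w : {i // p i} → ℝ} (hw : w ∈ stdSimplex ℝ {i // p i}) :
    (fun i ↦ if h : p i then 1 - w ⟨i, h⟩ else 1) ∈ cornerSlice p := by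
  refine ⟨fun i hi ↦ dif_neg hi, fun i ↦ ?_, ?_⟩
  · dsimp only
    split_ifs
    exacts [sub_le_self _ (hw.1 _), le_rfl]
  · have hdefect : ∑ i, (1 - if h : p i then 1 - w ⟨i, h⟩ else 1) = 1 := by
      rw [← Fintype.sum_subtype_eq_sum_of_eq_zero p fun i hi ↦ by rw [dif_neg hi, sub_self]]
      simpa [Subtype.prop] using hw.2
    linarith [sum_one_sub (fun i ↦ if h : p i then 1 - w ⟨i, h⟩ else 1)]

variable (p)

noncomputable def cornerSliceHomeomorph : cornerSlice p ≃ₜ stdSimplex ℝ {i // p i} where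
  toFun v := ⟨_, one_sub_mem_stdSimplex v.2⟩
  invFun w := ⟨_, dite_one_sub_mem_cornerSlice w.2⟩
  left_inv v := by
    ext i
    by_cases h : p i
    · simp [h]
    · simp [h, v.2.1 i h]
  right_inv w := by
    ext i
    change 1 - (if h : p i then 1 - w ⟨i, h⟩ else 1) = w i
    rw [dif_pos i.2, sub_sub_cancel]
  continuous_toFun := by
    refine .subtype_mk (continuous_pi fun i ↦ ?_) _
    exact continuous_const.sub ((continuous_apply _).comp continuous_subtype_val)
  continuous_invFun := by
    refine .subtype_mk (continuous_pi fun i ↦ ?_) _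
    split_ifs
    exacts [continuous_const.sub ((continuous_apply _).comp continuous_subtype_val),
      continuous_const]

end CornerSlice

theorem SignType.coe_eq_one_of_ne {s : SignType} (hneg : s ≠ -1) (hzero : s ≠ 0) :
    (s : ℝ) = 1 := by
  cases s <;> simp_all

theorem geom_inter_eq_cornerSlice {n : ℕ} {x : Fin n → SignType} (hneg : ∀ i, x i ≠ -1) :
    geom x ∩ {v | ∑ i, v i = (n : ℝ) - 1} = cornerSlice (fun i ↦ x i = 0) := by
  ext v
  simp only [Set.mem_inter_iff, Set.mem_ofPred_eq]
  constructor
  · rintro ⟨hv, hsum⟩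
    have hfixed i (hi : x i ≠ 0) : v i = 1 := by
      rw [(hv i).2 hi, SignType.coe_eq_one_of_ne (hneg i) hi]
    refine ⟨hfixed, fun i ↦ ?_, by simpa using hsum⟩
    by_cases hi : x i = 0
    exacts [((hv i).1 hi).2, (hfixed i hi).le]
  · rintro hv
    have hfree i (hi : x i = 0) : 0 ≤ v i := by
      have : 1 - v i ≤ 1 := stdSimplex.le_one ⟨_, one_sub_mem_stdSimplex hv⟩ ⟨i, hi⟩
      linarith
    refine ⟨fun i ↦ ⟨fun hi ↦ ⟨by linarith [hfree i hi], hv.2.1 i⟩, fun hi ↦ ?_⟩,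
      by simpa using hv.2.2⟩
    rw [hv.1 i hi, SignType.coe_eq_one_of_ne (hneg i) hi]

theorem stmt_15_general (n : ℕ) (x : Fin n → SignType)
    (hneg : ∀ i, x i ≠ -1) (k : ℕ) (hdim : dim x = k) :
    Nonempty (↥(geom x ∩ {p : Fin n → ℝ | ∑ i, p i = (n : ℝ) - 1}) ≃ₜ
      ↥(stdSimplex ℝ (Fin k))) := by
  have hcard : Fintype.card {i // x i = 0} = k := by
    rw [Fintype.card_subtype]
    exact hdim
  exact ⟨(Homeomorph.setCongr (geom_inter_eq_cornerSlice hneg)).trans <|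
    (cornerSliceHomeomorph _).trans (stdSimplex.homeomorphCongr (Fintype.equivFinOfCardEq hcard))⟩

/-- A `k`-dimensional sub-cube with word in `0`'s and `+`'s is sliced by the hyperplane
`∑ p i = n - 1` in a simplex of dimension `k - 1`. -/
theorem stmt_15 (n : ℕ) (hn : 1 ≤ n) (x : Fin n → SignType)
    (hneg : ∀ i, x i ≠ -1) (k : ℕ) (hdim : dim x = k) (hk : 1 ≤ k) :
    Nonempty (↥(geom x ∩ {p : Fin n → ℝ | ∑ i, p i = (n : ℝ) - 1}) ≃ₜ
      ↥(stdSimplex ℝ (Fin k))) :=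
  stmt_15_general n x hneg k hdim
end

section
/- For every n ≥ 1: each element x of ψ (n-1) n has exactly one nonzero coordinate, and x has no coordinate equal to -1 if and only if its unique nonzero coordinate is at an index i : Fin n with i.val odd; dually, each element y of ω (n-1) n has exactly one nonzero coordinate, and y has no coordinate equal to -1 if and only if its unique nonzero coordinate is at an index i with i.val even. (Under the slicing correspondence, the source faces of the simplex arise by deleting odd vertices and the target faces by deleting even vertices.) -/
lemma snoc_case {k : ℕ} (z : Fin (k+1) → SignType) (i : Fin (k+1))
    (hi : ∀ j, z j ≠ 0 ↔ j = i) :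
    ∀ j, app 0 z j ≠ 0 ↔ j = i.castSucc := by
  intro j
  induction j using Fin.lastCases with
  | last => simp [app, Fin.snoc_last, (Fin.castSucc_lt_last i).ne']
  | cast m => simp [app, Fin.snoc_castSucc, hi m, Fin.castSucc_inj]

lemma last_case {k : ℕ} (s : SignType) (hs : s ≠ 0) :
    ∀ j, app s (fun _ => (0 : SignType)) j ≠ 0 ↔ j = Fin.last (k+1) := by
  intro j
  induction j using Fin.lastCases with
  | last => simp [app, Fin.snoc_last, hs]
  | cast m => simp [app, Fin.snoc_castSucc, (Fin.castSucc_lt_last m).ne]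

lemma psi_char : ∀ n, ∀ x ∈ Psi n (n+1),
    ∃ i : Fin (n+1), (∀ j, x j ≠ 0 ↔ j = i) ∧
      x i = (if Even i.val then -1 else 1) := by
  intro n
  induction n with
  | zero =>
    intro x hx
    simp only [Psi, Finset.mem_singleton] at hx
    subst hx
    exact ⟨0, fun j => by simp [Fin.fin_one_eq_zero j], by simp⟩
  | succ k ih =>
    intro x hx
    rw [Psi] at hx
    rw [if_neg (by omega)] at hx
    have hsing : Psi (k+1) (k+1) = {fun _ => 0} := by simp [Psi]
    by_cases he : Even (k+1) <;>
      simp only [he, ite_true, ite_false, hsing, Finset.mem_union,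
        Finset.mem_image, Finset.mem_singleton] at hx
    · rcases hx with ⟨y, hy, rfl⟩ | ⟨z, rfl, rfl⟩
      · obtain ⟨i, hi, hsig⟩ := ih y hy
        exact ⟨i.castSucc, snoc_case y i hi, by simpa [app, Fin.snoc_castSucc] using hsig⟩
      · exact ⟨Fin.last (k+1), last_case _ (by decide),
          by simp [app, Fin.snoc_last, Fin.val_last, he]⟩
    · rcases hx with ⟨y, hy, rfl⟩ | ⟨z, rfl, rfl⟩
      · obtain ⟨i, hi, hsig⟩ := ih y hy
        exact ⟨i.castSucc, snoc_case y i hi, by simpa [app, Fin.snoc_castSucc] using hsig⟩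
      · exact ⟨Fin.last (k+1), last_case _ (by decide),
          by simp [app, Fin.snoc_last, Fin.val_last, he]⟩

lemma omega_char : ∀ n, ∀ x ∈ Omega n (n+1),
    ∃ i : Fin (n+1), (∀ j, x j ≠ 0 ↔ j = i) ∧
      x i = (if Even i.val then 1 else -1) := by
  intro n
  induction n with
  | zero =>
    intro x hx
    simp only [Omega, Finset.mem_singleton] at hx
    subst hx
    exact ⟨0, fun j => by simp [Fin.fin_one_eq_zero j], by simp⟩
  | succ k ih =>
    intro x hx
    rw [Omega] at hx
    rw [if_neg (by omega)] at hx
    have hsing : Omega (k+1) (k+1) = {fun _ => 0} := by simp [Omega]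
    by_cases he : Even (k+1) <;>
      simp only [he, ite_true, ite_false, hsing, Finset.mem_union,
        Finset.mem_image, Finset.mem_singleton] at hx
    · rcases hx with ⟨z, rfl, rfl⟩ | ⟨y, hy, rfl⟩
      · exact ⟨Fin.last (k+1), last_case _ (by decide),
          by simp [app, Fin.snoc_last, Fin.val_last, he]⟩
      · obtain ⟨i, hi, hsig⟩ := ih y hy
        exact ⟨i.castSucc, snoc_case y i hi, by simpa [app, Fin.snoc_castSucc] using hsig⟩
    · rcases hx with ⟨z, rfl, rfl⟩ | ⟨y, hy, rfl⟩
      · exact ⟨Fin.last (k+1), last_case _ (by decide),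
          by simp [app, Fin.snoc_last, Fin.val_last, he]⟩
      · obtain ⟨i, hi, hsig⟩ := ih y hy
        exact ⟨i.castSucc, snoc_case y i hi, by simpa [app, Fin.snoc_castSucc] using hsig⟩

/-- Each element of `ψ (n-1) n` has a unique nonzero coordinate, which avoids `-1`
exactly when it sits at an odd index; dually for `ω (n-1) n` with even indices. -/
theorem stmt_16 (n : ℕ) (hn : 1 ≤ n) :
    (∀ x ∈ Psi (n - 1) n, (∃! i, x i ≠ 0) ∧
      ((∀ i, x i ≠ -1) ↔ ∃ i, x i ≠ 0 ∧ Odd i.val)) ∧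
    (∀ y ∈ Omega (n - 1) n, (∃! i, y i ≠ 0) ∧
      ((∀ i, y i ≠ -1) ↔ ∃ i, y i ≠ 0 ∧ Even i.val)) := by
  obtain ⟨m, rfl⟩ : ∃ m, n = m + 1 := ⟨n - 1, by omega⟩
  simp only [Nat.add_sub_cancel]
  constructor
  · intro x hx
    obtain ⟨i, hi, hsig⟩ := psi_char m x hx
    have hne : x i ≠ 0 := (hi i).mpr rfl
    refine ⟨⟨i, hne, fun j hj => (hi j).mp hj⟩, ?_⟩
    constructor
    · intro h
      refine ⟨i, hne, ?_⟩
      rw [Nat.odd_iff, ← Nat.not_even_iff]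
      intro hev
      exact h i (by rwa [if_pos hev] at hsig)
    · rintro ⟨j, hj, hodd⟩ i'
      have hji : j = i := (hi j).mp hj
      subst hji
      have : x j = 1 := by rwa [if_neg (Nat.not_even_iff_odd.mpr hodd)] at hsig
      intro hcon
      have : i' = j := (hi i').mp (by rw [hcon]; decide)
      subst this
      simp_all
  · intro y hy
    obtain ⟨i, hi, hsig⟩ := omega_char m y hy
    have hne : y i ≠ 0 := (hi i).mpr rfl
    refine ⟨⟨i, hne, fun j hj => (hi j).mp hj⟩, ?_⟩
    constructor
    · intro h
      refine ⟨i, hne, ?_⟩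
      by_contra hev
      exact h i (by rwa [if_neg hev] at hsig)
    · rintro ⟨j, hj, hev⟩ i'
      have hji : j = i := (hi j).mp hj
      subst hji
      have : y j = 1 := by rwa [if_pos hev] at hsig
      intro hcon
      have : i' = j := (hi i').mp (by rw [hcon]; decide)
      subst this
      simp_all
end
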